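/- arXiv:2505.19731 — 7 statements merged into one kernel-verified Lean document; each statement's English description precedes it below -/
import Mathlib

section
/- Let Y be a finite set and P : Y × Y → [0,1] a preference matrix satisfying P(y,y') + P(y',y) = 1 for all y, y'. For vectors u, v ∈ ℝ^Y with ∑_y v(y) = 0, the bilinear form |u^T P v| ≤ (1/2)‖u‖₁ ‖v‖₁. -/
open Finset

theorem stmt0 {Y : Type*} [Fintype Y] (P : Y → Y → ℝ)
    (hP0 : ∀ y y', 0 ≤ P y y') (hP1 : ∀ y y', P y y' ≤ 1)
    (hsym : ∀ y y', P y y' + P y' y = 1)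
    (u v : Y → ℝ) (hv : ∑ y, v y = 0) :
    |∑ y, ∑ y', u y * P y y' * v y'| ≤
      (1 / 2) * (∑ y, |u y|) * (∑ y, |v y|) := by
  have key : ∑ y, ∑ y', u y * P y y' * v y'
      = ∑ y, ∑ y', u y * (P y y' - 1/2) * v y' := by
    have : ∀ y : Y, ∑ y', u y * (P y y' - 1/2) * v y'
        = (∑ y', u y * P y y' * v y') - u y * (1/2) * (∑ y', v y') := by
      intro y
      rw [Finset.mul_sum, ← Finset.sum_sub_distrib]
      congr 1; ext y'; ring
    simp only [this, hv, mul_zero, sub_zero]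
  rw [key]
  calc |∑ y, ∑ y', u y * (P y y' - 1/2) * v y'|
      ≤ ∑ y, |∑ y', u y * (P y y' - 1/2) * v y'| := Finset.abs_sum_le_sum_abs _ _
    _ ≤ ∑ y, ∑ y', |u y * (P y y' - 1/2) * v y'| := by
        apply Finset.sum_le_sum; intro y _; exact Finset.abs_sum_le_sum_abs _ _
    _ ≤ ∑ y, ∑ y', |u y| * (1/2) * |v y'| := by
        apply Finset.sum_le_sum; intro y _
        apply Finset.sum_le_sum; intro y' _
        rw [abs_mul, abs_mul]
        have h : |P y y' - 1/2| ≤ 1/2 := by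
          rw [abs_le]; constructor <;> [linarith [hP0 y y']; linarith [hP1 y y']]
        gcongr
    _ = (1 / 2) * (∑ y, |u y|) * (∑ y, |v y|) := by
        rw [Finset.sum_comm]
        simp_rw [← Finset.sum_mul, ← Finset.mul_sum]
        ring
end

section
/- Define the λ-regularized preference P_λ(π ≻ μ) = π^T P μ - λ KL(π‖τ) + λ KL(μ‖τ) and the suboptimality S(π,μ) = 1/2 - P_λ(π ≻ μ). If π* is a symmetric Nash equilibrium of this game (i.e., P_λ(π* ≻ μ) ≥ 1/2 for all μ ∈ Δ_Y), then for all π, μ ∈ Δ_Y: S(π,μ) ≤ S(π,π*) + (1/2)‖π - π*‖₁ · ‖μ - π*‖₁. -/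
open Finset

/-- Kullback–Leibler divergence between two distributions on a finite set. -/
noncomputable def KL {Y : Type*} [Fintype Y] (p q : Y → ℝ) : ℝ :=
  ∑ y, p y * Real.log (p y / q y)

theorem stmt4 {Y : Type*} [Fintype Y] (P : Y → Y → ℝ)
    (hP0 : ∀ y y', 0 ≤ P y y') (hP1 : ∀ y y', P y y' ≤ 1)
    (hsym : ∀ y y', P y y' + P y' y = 1)
    (lam : ℝ) (hlam : 0 < lam)
    (τ : Y → ℝ) (hτ : ∀ y, 0 < τ y) (hτ1 : ∑ y, τ y = 1)
    -- the λ-regularized preference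
    (Plam : (Y → ℝ) → (Y → ℝ) → ℝ)
    (hPlam : ∀ π μ : Y → ℝ,
      Plam π μ = (∑ y, ∑ y', π y * P y y' * μ y') - lam * KL π τ + lam * KL μ τ)
    -- the suboptimality
    (S : (Y → ℝ) → (Y → ℝ) → ℝ)
    (hS : ∀ π μ : Y → ℝ, S π μ = 1 / 2 - Plam π μ)
    -- π* is a symmetric Nash equilibrium of the regularized game
    (πs : Y → ℝ) (hπs0 : ∀ y, 0 ≤ πs y) (hπs1 : ∑ y, πs y = 1)
    (hNE : ∀ μ : Y → ℝ, (∀ y, 0 ≤ μ y) → ∑ y, μ y = 1 → 1 / 2 ≤ Plam πs μ) :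
    ∀ π μ : Y → ℝ, (∀ y, 0 ≤ π y) → ∑ y, π y = 1 →
      (∀ y, 0 ≤ μ y) → ∑ y, μ y = 1 →
      S π μ ≤ S π πs + (1 / 2) * (∑ y, |π y - πs y|) * (∑ y, |μ y - πs y|) := by

  intro π μ hπ0 hπ1 hμ0 hμ1
  have hNEμ := hNE μ hμ0 hμ1
  rw [hPlam] at hNEμ
  rw [hS, hS, hPlam, hPlam]
  set A := ∑ y, |π y - πs y| with hA
  set B := ∑ y, |μ y - πs y| with hB
  -- Q πs πs = 1/2
  have hQss : (∑ y, ∑ y', πs y * P y y' * πs y') = 1 / 2 := by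
    have hswap : (∑ y, ∑ y', πs y * P y y' * πs y')
        = ∑ y, ∑ y', πs y' * P y' y * πs y := Finset.sum_comm
    have h2 : (∑ y, ∑ y', πs y * P y y' * πs y')
        + (∑ y, ∑ y', πs y * P y y' * πs y') = 1 := by
      nth_rewrite 2 [hswap]
      rw [← Finset.sum_add_distrib]
      have : ∀ y, (∑ y', πs y * P y y' * πs y') + (∑ y', πs y' * P y' y * πs y)
          = ∑ y', πs y * πs y' := by
        intro y
        rw [← Finset.sum_add_distrib]
        refine Finset.sum_congr rfl fun y' _ => ?_
        linear_combination (πs y * πs y') * (hsym y y')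
      rw [Finset.sum_congr rfl fun y _ => this y]
      rw [← Finset.sum_mul_sum, hπs1]
      norm_num
    linarith
  have hsuma : ∑ y, (π y - πs y) = 0 := by
    rw [Finset.sum_sub_distrib, hπ1, hπs1]; ring
  have h0 : ∑ y, ∑ y', (π y - πs y) * (μ y' - πs y') = 0 := by
    rw [← Finset.sum_mul_sum, hsuma, zero_mul]
  have hsplit : ∑ y, ∑ y', (π y - πs y) * P y y' * (μ y' - πs y')
      = (∑ y, ∑ y', π y * P y y' * μ y') - (∑ y, ∑ y', π y * P y y' * πs y')
        - (∑ y, ∑ y', πs y * P y y' * μ y') + (∑ y, ∑ y', πs y * P y y' * πs y') := by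
    rw [← Finset.sum_sub_distrib, ← Finset.sum_sub_distrib, ← Finset.sum_add_distrib]
    refine Finset.sum_congr rfl fun y _ => ?_
    rw [← Finset.sum_sub_distrib, ← Finset.sum_sub_distrib, ← Finset.sum_add_distrib]
    refine Finset.sum_congr rfl fun y' _ => ?_
    ring
  have hexp2 : ∑ y, ∑ y', (π y - πs y) * (P y y' - 1 / 2) * (μ y' - πs y')
      = (∑ y, ∑ y', (π y - πs y) * P y y' * (μ y' - πs y'))
        - (1 / 2) * ∑ y, ∑ y', (π y - πs y) * (μ y' - πs y') := by
    rw [Finset.mul_sum, ← Finset.sum_sub_distrib]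
    refine Finset.sum_congr rfl fun y _ => ?_
    rw [Finset.mul_sum, ← Finset.sum_sub_distrib]
    refine Finset.sum_congr rfl fun y' _ => ?_
    ring
  have key : -((1 / 2) * A * B)
      ≤ ∑ y, ∑ y', (π y - πs y) * (P y y' - 1 / 2) * (μ y' - πs y') := by
    have hAB : (1 / 2) * A * B = ∑ y, ∑ y', (1 / 2 * |π y - πs y|) * |μ y' - πs y'| := by
      rw [← Finset.sum_mul_sum]
      rw [hA, hB]
      congr 1
      exact Finset.mul_sum _ _ _
    rw [hAB, ← Finset.sum_neg_distrib]
    refine Finset.sum_le_sum fun y _ => ?_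
    rw [← Finset.sum_neg_distrib]
    refine Finset.sum_le_sum fun y' _ => ?_
    have habs : |(π y - πs y) * (P y y' - 1 / 2) * (μ y' - πs y')|
        ≤ 1 / 2 * |π y - πs y| * |μ y' - πs y'| := by
      rw [abs_mul, abs_mul]
      have hP : |P y y' - 1 / 2| ≤ 1 / 2 := by
        rw [abs_le]; constructor <;> [linarith [hP0 y y']; linarith [hP1 y y']]
      have h1 : |π y - πs y| * |P y y' - 1 / 2| * |μ y' - πs y'|
          ≤ |π y - πs y| * (1 / 2) * |μ y' - πs y'| := by
        gcongr
      linarith [h1, (by ring : |π y - πs y| * (1 / 2) * |μ y' - πs y'|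
        = 1 / 2 * |π y - πs y| * |μ y' - πs y'|)]
    have := neg_abs_le ((π y - πs y) * (P y y' - 1 / 2) * (μ y' - πs y'))
    linarith
  linarith [hQss, hsplit, hexp2, key, h0, hNEμ]
end

section
/- Define V(π,μ) = μ^T P π + λ KL(π‖τ) and V*(μ) = min_π V(π,μ). Then for any π ∈ Δ_Y, the exploitability gap satisfies max_{μ ∈ Δ_Y} (1/2 - P_λ(π ≻ μ)) = V(π,π) - V*(π), where P_λ(π ≻ μ) = π^T P μ - λ KL(π‖τ) + λ KL(μ‖τ). -/
open Finset

lemma KL_nonneg {Y : Type*} [Fintype Y] (p q : Y → ℝ)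
    (hp0 : ∀ y, 0 ≤ p y) (hp1 : ∑ y, p y = 1)
    (hq : ∀ y, 0 < q y) (hq1 : ∑ y, q y = 1) : 0 ≤ KL p q := by
  have key : ∀ y, p y - q y ≤ p y * Real.log (p y / q y) := by
    intro y
    rcases eq_or_lt_of_le (hp0 y) with h | h
    · simp [← h, (hq y).le]
    · have h1 : Real.log (q y / p y) ≤ q y / p y - 1 :=
        Real.log_le_sub_one_of_pos (div_pos (hq y) h)
      have h2 : Real.log (p y / q y) = - Real.log (q y / p y) := by
        rw [← Real.log_inv, inv_div]
      nlinarith [mul_le_mul_of_nonneg_left h1 (hp0 y),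
        mul_div_cancel₀ (q y) (ne_of_gt h)]
  calc (0 : ℝ) = ∑ y, (p y - q y) := by rw [Finset.sum_sub_distrib, hp1, hq1]; ring
    _ ≤ KL p q := Finset.sum_le_sum fun y _ => key y

theorem stmt5 {Y : Type*} [Fintype Y] (P : Y → Y → ℝ)
    (hP0 : ∀ y y', 0 ≤ P y y') (hP1 : ∀ y y', P y y' ≤ 1)
    (hsym : ∀ y y', P y y' + P y' y = 1)
    (lam : ℝ) (hlam : 0 < lam)
    (τ : Y → ℝ) (hτ : ∀ y, 0 < τ y) (hτ1 : ∑ y, τ y = 1)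
    -- the value V(π,μ) = μᵀPπ + λ KL(π‖τ)
    (V : (Y → ℝ) → (Y → ℝ) → ℝ)
    (hV : ∀ π μ : Y → ℝ,
      V π μ = (∑ y, ∑ y', μ y * P y y' * π y') + lam * KL π τ)
    -- the λ-regularized preference
    (Plam : (Y → ℝ) → (Y → ℝ) → ℝ)
    (hPlam : ∀ π μ : Y → ℝ,
      Plam π μ = (∑ y, ∑ y', π y * P y y' * μ y') - lam * KL π τ + lam * KL μ τ)
    (π : Y → ℝ) (hπ0 : ∀ y, 0 ≤ π y) (hπ1 : ∑ y, π y = 1) :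
    sSup ((fun μ => 1 / 2 - Plam π μ) ''
        {p : Y → ℝ | (∀ y, 0 ≤ p y) ∧ ∑ y, p y = 1})
      = V π π - sInf ((fun π' => V π' π) ''
        {p : Y → ℝ | (∀ y, 0 ≤ p y) ∧ ∑ y, p y = 1}) := by
  set S : Set (Y → ℝ) := {p : Y → ℝ | (∀ y, 0 ≤ p y) ∧ ∑ y, p y = 1} with hS
  set c : ℝ := V π π with hc
  -- π^T P π = 1/2
  have hswap : ∑ y, ∑ y', π y * P y y' * π y'
      = ∑ y, ∑ y', π y' * P y' y * π y := by
    exact Finset.sum_comm 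
  have hhalf : ∑ y, ∑ y', π y * P y y' * π y' = 1 / 2 := by
    have h2 : (∑ y, ∑ y', π y * P y y' * π y')
        + (∑ y, ∑ y', π y' * P y' y * π y) = 1 := by
      rw [← Finset.sum_add_distrib]
      have step : ∀ y ∈ Finset.univ (α := Y),
          ((∑ y', π y * P y y' * π y') + ∑ y', π y' * P y' y * π y) = π y := by
        intro y _
        rw [← Finset.sum_add_distrib]
        have step2 : ∀ y' ∈ Finset.univ (α := Y),
            π y * P y y' * π y' + π y' * P y' y * π y = π y * π y' := by
          intro y' _
          linear_combination (π y * π y') * hsym y y'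
        rw [Finset.sum_congr rfl step2, ← Finset.mul_sum, hπ1, mul_one]
      rw [Finset.sum_congr rfl step, hπ1]
    linarith
  -- pointwise identity
  have hfun : (fun μ => 1 / 2 - Plam π μ) = (fun μ => c - V μ π) := by
    funext μ
    rw [hPlam, hc, hV, hV, hhalf]
    ring
  -- image rewriting
  have himg : (fun μ => 1 / 2 - Plam π μ) '' S
      = (fun x => c - x) '' ((fun π' => V π' π) '' S) := by
    rw [hfun, Set.image_image]
  set A : Set ℝ := (fun π' => V π' π) '' S with hA
  have hne : A.Nonempty := ⟨V π π, ⟨π, ⟨hπ0, hπ1⟩, rfl⟩⟩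
  have hbdd : BddBelow A := by
    refine ⟨0, ?_⟩
    rintro a ⟨μ, ⟨hμ0, hμ1⟩, rfl⟩
    show 0 ≤ V μ π
    rw [hV]
    have h1 : 0 ≤ ∑ y, ∑ y', π y * P y y' * μ y' :=
      Finset.sum_nonneg fun y _ => Finset.sum_nonneg fun y' _ =>
        mul_nonneg (mul_nonneg (hπ0 y) (hP0 y y')) (hμ0 y')
    have h2 : 0 ≤ KL μ τ := KL_nonneg μ τ hμ0 hμ1 hτ hτ1
    positivity
  have hlub : IsLUB ((fun x => c - x) '' A) (c - sInf A) := by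
    constructor
    · rintro z ⟨a, ha, rfl⟩
      exact sub_le_sub_left (csInf_le hbdd ha) c
    · intro b hb
      have : c - b ≤ sInf A := by
        apply le_csInf hne
        intro a ha
        have := hb ⟨a, ha, rfl⟩
        dsimp at this
        linarith
      linarith
  rw [himg, hlub.csSup_eq (hne.image _)]
end

section
/- For any full-support π ∈ Δ_Y and fixed opponent μ, let g(y) = (P^T μ)_y + λ(1 + log(π(y)/τ(y))) be the gradient of the regularized value at π. Then V(π,μ) - V*(μ) ≤ (1/(2λ)) ‖g‖_span², where ‖g‖_span = inf_{c ∈ ℝ} ‖g + c·1‖_∞. -/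
open Finset

/-- Span seminorm: `‖g‖_span = inf_c ‖g + c·1‖_∞` (sup norm on functions). -/
noncomputable def spanNorm {Y : Type*} [Fintype Y] (g : Y → ℝ) : ℝ :=
  ⨅ c : ℝ, ‖(fun y => g y + c : Y → ℝ)‖

/-! The three-point identity for the entropy-regularised linear objective `V = ⟨a, ·⟩ + λ KL(·‖τ)`
reads `V(π) - V(π') = ⟨g, π - π'⟩ - λ KL(π'‖π)`, where `g` is the gradient at `π`. Since `π - π'`
has mass zero, `g` may be replaced by `g + c`; Hölder bounds the first term by `‖g + c‖∞ ‖π - π'‖₁`,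
and Pinsker bounds `KL(π'‖π)` below by `‖π - π'‖₁² / 2`. Maximising the resulting quadratic in
`‖π - π'‖₁` gives `‖g + c‖∞² / (2λ)`, uniformly in `π'` and for every `c`. -/

section

open Real

lemma monotoneOn_add_one_mul_log_sub_two_mul :
    MonotoneOn (fun t : ℝ => (t + 1) * log t - 2 * (t - 1)) (Set.Ioi 0) := by
  have hderiv : ∀ x : ℝ, 0 < x → HasDerivAt (fun t : ℝ => (t + 1) * log t - 2 * (t - 1))
      (log x + x⁻¹ - 1) x := by
    intro x hx
    refine ((((hasDerivAt_id x).add_const 1).mul (hasDerivAt_log hx.ne')).sub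
      (((hasDerivAt_id x).sub_const 1).const_mul 2)).congr_deriv ?_
    simp only [id]
    field_simp
    ring
  refine monotoneOn_of_deriv_nonneg (convex_Ioi 0)
    (fun x hx => (hderiv x hx).continuousAt.continuousWithinAt)
    (fun x hx => (hderiv x (by simpa using hx)).differentiableAt.differentiableWithinAt)
    fun x hx => ?_
  rw [interior_Ioi] at hx
  rw [(hderiv x hx).deriv]
  have := log_le_sub_one_of_pos (inv_pos.mpr hx)
  rw [log_inv] at this
  linarith

lemma hasDerivAt_pinsker_gap {x : ℝ} (hx : 0 < x) :
    HasDerivAt (fun t : ℝ => 2 * (t + 2) * (t * log t - t + 1) - 3 * (t - 1) ^ 2)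
      (4 * ((x + 1) * log x - 2 * (x - 1))) x := by
  have hxlog : HasDerivAt (fun t : ℝ => t * log t - t + 1) (log x) x := by
    refine ((((hasDerivAt_id x).mul (hasDerivAt_log hx.ne')).sub (hasDerivAt_id x)).add_const
      1).congr_deriv ?_
    simp [hx.ne']
  refine ((((hasDerivAt_id x).add_const 2).const_mul 2).mul hxlog).sub
    ((((hasDerivAt_id x).sub_const 1).pow 2).const_mul 3) |>.congr_deriv ?_
  simp only [id]
  ring

lemma continuous_pinsker_gap :
    Continuous fun t : ℝ => 2 * (t + 2) * (t * log t - t + 1) - 3 * (t - 1) ^ 2 := by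
  have := continuous_mul_log
  fun_prop

lemma three_mul_sub_one_sq_le {t : ℝ} (ht : 0 ≤ t) :
    3 * (t - 1) ^ 2 ≤ 2 * (t + 2) * (t * log t - t + 1) := by
  set F : ℝ → ℝ := fun t => 2 * (t + 2) * (t * log t - t + 1) - 3 * (t - 1) ^ 2
  suffices F 1 ≤ F t by simpa [F] using this
  -- the derivative `4 ((x + 1) log x - 2 (x - 1))` is monotone and vanishes at `1`
  rcases le_or_gt t 1 with h1 | h1
  · refine antitoneOn_of_deriv_nonpos (convex_Icc 0 1) continuous_pinsker_gap.continuousOn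
      (fun x hx => ?_) (fun x hx => ?_) ⟨ht, h1⟩ ⟨zero_le_one, le_rfl⟩ h1
    all_goals rw [interior_Icc] at hx
    · exact (hasDerivAt_pinsker_gap hx.1).differentiableAt.differentiableWithinAt
    · rw [(hasDerivAt_pinsker_gap hx.1).deriv]
      have := monotoneOn_add_one_mul_log_sub_two_mul hx.1 (Set.mem_Ioi.2 one_pos) hx.2.le
      norm_num at this
      linarith
  · refine monotoneOn_of_deriv_nonneg (convex_Ici 1) continuous_pinsker_gap.continuousOn
      (fun x hx => ?_) (fun x hx => ?_) Set.self_mem_Ici h1.le h1.le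
    all_goals rw [interior_Ici] at hx
    · exact (hasDerivAt_pinsker_gap (one_pos.trans hx)).differentiableAt.differentiableWithinAt
    · rw [(hasDerivAt_pinsker_gap (one_pos.trans hx)).deriv]
      have := monotoneOn_add_one_mul_log_sub_two_mul (Set.mem_Ioi.2 one_pos)
        (Set.mem_Ioi.2 (one_pos.trans hx)) hx.le
      norm_num at this
      linarith

lemma three_mul_sub_sq_le {a b : ℝ} (ha : 0 ≤ a) (hb : 0 < b) :
    3 * (a - b) ^ 2 ≤ 2 * (a + 2 * b) * (a * log (a / b) - a + b) := by
  calc 3 * (a - b) ^ 2 = b ^ 2 * (3 * (a / b - 1) ^ 2) := by field_simp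
    _ ≤ b ^ 2 * (2 * (a / b + 2) * (a / b * log (a / b) - a / b + 1)) :=
        mul_le_mul_of_nonneg_left (three_mul_sub_one_sq_le (div_nonneg ha hb.le)) (sq_nonneg b)
    _ = 2 * (a + 2 * b) * (a * log (a / b) - a + b) := by field_simp

/-- Pinsker's inequality. -/
theorem sq_sum_abs_sub_le_two_mul_KL {Y : Type*} [Fintype Y] {p q : Y → ℝ}
    (hp : ∀ y, 0 ≤ p y) (hq : ∀ y, 0 < q y) (hp1 : ∑ y, p y = 1) (hq1 : ∑ y, q y = 1) :
    (∑ y, |p y - q y|) ^ 2 ≤ 2 * KL p q := by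
  have hw : ∀ y, 0 < (p y + 2 * q y) / 3 := fun y => by linarith [hp y, hq y]
  have hw1 : ∑ y, (p y + 2 * q y) / 3 = 1 := by
    rw [← sum_div, sum_add_distrib, ← mul_sum, hp1, hq1]
    norm_num
  -- Cauchy–Schwarz with the weights `(p + 2q)/3`, then `three_mul_sub_sq_le` termwise
  calc (∑ y, |p y - q y|) ^ 2
      ≤ (∑ y, |p y - q y| ^ 2 / ((p y + 2 * q y) / 3)) * ∑ y, (p y + 2 * q y) / 3 :=
        (div_le_iff₀ (by rw [hw1]; exact one_pos)).1
          (sq_sum_div_le_sum_sq_div _ _ fun y _ => hw y)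
    _ ≤ ∑ y, 2 * (p y * log (p y / q y) - p y + q y) := by
        rw [hw1, mul_one]
        refine sum_le_sum fun y _ => ?_
        rw [div_le_iff₀ (hw y), sq_abs]
        linarith [three_mul_sub_sq_le (hp y) (hq y)]
    _ = 2 * KL p q := by
        rw [← mul_sum, sum_add_distrib, sum_sub_distrib, hp1, hq1, KL]
        ring

lemma KL_eq_KL_add_sum_mul_log {Y : Type*} [Fintype Y] (p : Y → ℝ) {q τ : Y → ℝ}
    (hq : ∀ y, q y ≠ 0) (hτ : ∀ y, τ y ≠ 0) :
    KL p τ = KL p q + ∑ y, p y * log (q y / τ y) := by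
  simp only [KL, ← sum_add_distrib, ← mul_add]
  refine sum_congr rfl fun y _ => ?_
  rcases eq_or_ne (p y) 0 with hp | hp
  · simp [hp]
  · rw [← log_mul (div_ne_zero hp (hq y)) (div_ne_zero (hq y) (hτ y)),
      div_mul_div_cancel₀ (hq y)]

/-- Three-point identity: `lam • KL(σ‖ρ)` is the Bregman divergence of `lam • KL(·‖τ)`. -/
lemma linear_add_KL_sub_eq {Y : Type*} [Fintype Y] (a : Y → ℝ) (lam : ℝ) {τ ρ σ : Y → ℝ}
    (hτ : ∀ y, τ y ≠ 0) (hρ : ∀ y, ρ y ≠ 0) (hmass : ∑ y, σ y = ∑ y, ρ y) :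
    (∑ y, a y * ρ y + lam * KL ρ τ) - (∑ y, a y * σ y + lam * KL σ τ)
      = ∑ y, (a y + lam * (1 + log (ρ y / τ y))) * (ρ y - σ y) - lam * KL σ ρ := by
  have hterm : ∀ y, (a y + lam * (1 + log (ρ y / τ y))) * (ρ y - σ y)
      = a y * ρ y - a y * σ y + lam * (ρ y - σ y)
        + lam * (ρ y * log (ρ y / τ y)) - lam * (σ y * log (ρ y / τ y)) := fun y => by ring
  rw [KL_eq_KL_add_sum_mul_log σ hρ hτ, KL]
  simp only [hterm, sum_add_distrib, sum_sub_distrib, ← mul_sum, hmass]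
  ring

lemma sum_mul_le_norm_mul_sum_abs {Y : Type*} [Fintype Y] (h x : Y → ℝ) :
    ∑ y, h y * x y ≤ ‖h‖ * ∑ y, |x y| := by
  rw [mul_sum]
  refine sum_le_sum fun y _ => (le_abs_self _).trans ?_
  rw [abs_mul, ← Real.norm_eq_abs (h y)]
  exact mul_le_mul_of_nonneg_right (norm_le_pi_norm h y) (abs_nonneg _)

/-- With `t = ‖ρ - σ‖₁` and `M = ‖g + c‖∞`, Hölder and Pinsker bound the gap by
`M t - lam t² / 2 ≤ M² / (2 lam)`; shifting `g` by `c` is free because `ρ - σ` has mass zero. -/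
lemma two_mul_linear_add_KL_sub_le {Y : Type*} [Fintype Y] (a : Y → ℝ) {lam : ℝ}
    (hlam : 0 < lam) {τ ρ σ g : Y → ℝ} (hτ : ∀ y, τ y ≠ 0) (hρ : ∀ y, 0 < ρ y)
    (hρ1 : ∑ y, ρ y = 1) (hσ : ∀ y, 0 ≤ σ y) (hσ1 : ∑ y, σ y = 1)
    (hg : ∀ y, g y = a y + lam * (1 + log (ρ y / τ y))) (c : ℝ) :
    2 * lam * ((∑ y, a y * ρ y + lam * KL ρ τ) - (∑ y, a y * σ y + lam * KL σ τ))
      ≤ ‖fun y => g y + c‖ ^ 2 := by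
  have hshift : ∑ y, g y * (ρ y - σ y) = ∑ y, (g y + c) * (ρ y - σ y) := by
    simp only [add_mul, sum_add_distrib, ← mul_sum, sum_sub_distrib, hρ1, hσ1, sub_self,
      mul_zero, add_zero]
  have hpinsker := sq_sum_abs_sub_le_two_mul_KL hσ hρ hσ1 hρ1
  simp only [abs_sub_comm (σ _)] at hpinsker
  have hholder := sum_mul_le_norm_mul_sum_abs (fun y => g y + c) (fun y => ρ y - σ y)
  rw [linear_add_KL_sub_eq a lam hτ (fun y => (hρ y).ne') (hσ1.trans hρ1.symm)]
  simp only [← hg, hshift]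
  nlinarith [sq_nonneg (lam * ∑ y, |ρ y - σ y| - ‖fun y => g y + c‖),
    mul_le_mul_of_nonneg_left hpinsker (sq_nonneg lam)]

lemma two_mul_linear_add_KL_sub_sInf_le {Y : Type*} [Fintype Y] (a : Y → ℝ) {lam : ℝ}
    (hlam : 0 < lam) {τ ρ g : Y → ℝ} (hτ : ∀ y, τ y ≠ 0) (hρ : ∀ y, 0 < ρ y)
    (hρ1 : ∑ y, ρ y = 1) (hg : ∀ y, g y = a y + lam * (1 + log (ρ y / τ y))) (c : ℝ) :
    2 * lam * ((∑ y, a y * ρ y + lam * KL ρ τ)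
      - sInf ((fun σ => ∑ y, a y * σ y + lam * KL σ τ) ''
          {p : Y → ℝ | (∀ y, 0 ≤ p y) ∧ ∑ y, p y = 1}))
      ≤ ‖fun y => g y + c‖ ^ 2 := by
  rw [← le_div_iff₀' (by positivity), sub_le_comm]
  refine le_csInf ⟨_, ρ, ⟨fun y => (hρ y).le, hρ1⟩, rfl⟩ ?_
  rintro _ ⟨σ, ⟨hσ, hσ1⟩, rfl⟩
  rw [sub_le_comm, le_div_iff₀' (by positivity)]
  exact two_mul_linear_add_KL_sub_le a hlam hτ hρ hρ1 hσ hσ1 hg c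

lemma le_sq_iInf_of_forall_le_sq {ι : Type*} [Nonempty ι] {f : ι → ℝ} (hf : ∀ i, 0 ≤ f i)
    {x : ℝ} (h : ∀ i, x ≤ f i ^ 2) : x ≤ (⨅ i, f i) ^ 2 :=
  (sqrt_le_left (le_ciInf hf)).1 (le_ciInf fun i => (sqrt_le_left (hf i)).2 (h i))

end

theorem stmt6_general {Y : Type*} [Fintype Y] (P : Y → Y → ℝ)
    (lam : ℝ) (hlam : 0 < lam)
    (τ : Y → ℝ) (hτ : ∀ y, 0 < τ y)
    (μ : Y → ℝ)
    (π : Y → ℝ) (hπ : ∀ y, 0 < π y) (hπ1 : ∑ y, π y = 1)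
    -- gradient of the regularized value at π
    (g : Y → ℝ)
    (hg : ∀ y, g y = (∑ y', P y' y * μ y') + lam * (1 + Real.log (π y / τ y))) :
    ((∑ y, ∑ y', μ y * P y y' * π y') + lam * KL π τ)
      - sInf ((fun π' => (∑ y, ∑ y', μ y * P y y' * π' y') + lam * KL π' τ) ''
          {p : Y → ℝ | (∀ y, 0 ≤ p y) ∧ ∑ y, p y = 1})
      ≤ (1 / (2 * lam)) * (spanNorm g) ^ 2 := by
  have hlinear : ∀ ρ : Y → ℝ,
      ∑ y, ∑ y', μ y * P y y' * ρ y' = ∑ y, (∑ y', P y' y * μ y') * ρ y := fun ρ => by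
    rw [sum_comm]
    simp only [sum_mul]
    exact sum_congr rfl fun _ _ => sum_congr rfl fun _ _ => by ring
  simp only [hlinear]
  rw [one_div_mul_eq_div, le_div_iff₀' (by positivity)]
  exact le_sq_iInf_of_forall_le_sq (fun c => norm_nonneg _)
    (two_mul_linear_add_KL_sub_sInf_le _ hlam (fun y => (hτ y).ne') hπ hπ1 hg)

theorem stmt6 {Y : Type*} [Fintype Y] (P : Y → Y → ℝ)
    (hP0 : ∀ y y', 0 ≤ P y y') (hP1 : ∀ y y', P y y' ≤ 1)
    (hsym : ∀ y y', P y y' + P y' y = 1)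
    (lam : ℝ) (hlam : 0 < lam)
    (τ : Y → ℝ) (hτ : ∀ y, 0 < τ y) (hτ1 : ∑ y, τ y = 1)
    (μ : Y → ℝ) (hμ0 : ∀ y, 0 ≤ μ y) (hμ1 : ∑ y, μ y = 1)
    (π : Y → ℝ) (hπ : ∀ y, 0 < π y) (hπ1 : ∑ y, π y = 1)
    -- gradient of the regularized value at π
    (g : Y → ℝ)
    (hg : ∀ y, g y = (∑ y', P y' y * μ y') + lam * (1 + Real.log (π y / τ y))) :
    ((∑ y, ∑ y', μ y * P y y' * π y') + lam * KL π τ)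
      - sInf ((fun π' => (∑ y, ∑ y', μ y * P y y' * π' y') + lam * KL π' τ) ''
          {p : Y → ℝ | (∀ y, 0 ≤ p y) ∧ ∑ y, p y = 1})
      ≤ (1 / (2 * lam)) * (spanNorm g) ^ 2 :=
  stmt6_general P lam hlam τ hτ μ π hπ hπ1 g hg
end

section
/- Let π ∈ Δ_Y be full-support and H(π) = diag(π) - π π^T. Then for any x ∈ ℝ^Y, ‖H(π) x‖_span ≥ π_min · ‖x‖_span, where π_min = min_y π(y) and ‖x‖_span = (max_y x_y - min_y x_y)/2. -/
open Finset

theorem stmt7 {Y : Type*} [Fintype Y] [Nonempty Y]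
    (π x : Y → ℝ) (hπ : ∀ y, 0 < π y) (hπ1 : ∑ y, π y = 1) :
    (Finset.univ.inf' Finset.univ_nonempty π) *
        ((Finset.univ.sup' Finset.univ_nonempty x
          - Finset.univ.inf' Finset.univ_nonempty x) / 2)
      ≤ (Finset.univ.sup' Finset.univ_nonempty
            (fun y => π y * (x y - ∑ y', π y' * x y'))
         - Finset.univ.inf' Finset.univ_nonempty
            (fun y => π y * (x y - ∑ y', π y' * x y'))) / 2 := by
  obtain ⟨a, -, ha⟩ := Finset.exists_mem_eq_sup' Finset.univ_nonempty x
  obtain ⟨b, -, hb⟩ := Finset.exists_mem_eq_inf' Finset.univ_nonempty x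
  set m := ∑ y', π y' * x y' with hm
  have hxa : ∀ y, x y ≤ x a := by
    intro y; rw [← ha]; exact Finset.le_sup' x (Finset.mem_univ y)
  have hxb : ∀ y, x b ≤ x y := by
    intro y; rw [← hb]; exact Finset.inf'_le x (Finset.mem_univ y)
  have hma : m ≤ x a := by
    calc m ≤ ∑ y, π y * x a := by
            apply Finset.sum_le_sum
            intro y _
            exact mul_le_mul_of_nonneg_left (hxa y) (hπ y).le
      _ = x a := by rw [← Finset.sum_mul, hπ1, one_mul]
  have hmb : x b ≤ m := by
    calc x b = ∑ y, π y * x b := by rw [← Finset.sum_mul, hπ1, one_mul]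
      _ ≤ m := by
            apply Finset.sum_le_sum
            intro y _
            exact mul_le_mul_of_nonneg_left (hxb y) (hπ y).le
  set p := Finset.univ.inf' Finset.univ_nonempty π with hp
  have hpa : p ≤ π a := Finset.inf'_le π (Finset.mem_univ a)
  have hpb : p ≤ π b := Finset.inf'_le π (Finset.mem_univ b)
  have hsup : π a * (x a - m) ≤
      Finset.univ.sup' Finset.univ_nonempty (fun y => π y * (x y - m)) :=
    Finset.le_sup' (fun y => π y * (x y - m)) (Finset.mem_univ a)
  have hinf : Finset.univ.inf' Finset.univ_nonempty (fun y => π y * (x y - m))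
      ≤ π b * (x b - m) := Finset.inf'_le (fun y => π y * (x y - m)) (Finset.mem_univ b)
  rw [ha, hb]
  nlinarith [mul_nonneg (sub_nonneg.mpr hpa) (sub_nonneg.mpr hma),
    mul_nonneg (sub_nonneg.mpr hpb) (sub_nonneg.mpr hmb)]
end

section
/- With π*_β the β-regularized von Neumann winner anchored at full-support π_ref (characterized by log π*_β = log π_ref + (1/β)(1/2 - P^T π*_β) + c*·1), one has KL(π*_β ‖ π_ref) ≤ 1/(2β). -/
open Finset

theorem stmt12 {Y : Type*} [Fintype Y] (P : Y → Y → ℝ)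
    (hP0 : ∀ y y', 0 ≤ P y y') (hP1 : ∀ y y', P y y' ≤ 1)
    (hsym : ∀ y y', P y y' + P y' y = 1)
    (β : ℝ) (hβ : 0 < β)
    (πref : Y → ℝ) (href : ∀ y, 0 < πref y) (href1 : ∑ y, πref y = 1)
    (πs : Y → ℝ) (hπs : ∀ y, 0 < πs y) (hπs1 : ∑ y, πs y = 1)
    (c : ℝ)
    (hfix : ∀ y, Real.log (πs y)
      = Real.log (πref y) + (1 / β) * (1 / 2 - ∑ y', P y' y * πs y') + c) :
    KL πs πref ≤ 1 / (2 * β) := by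
  have hne : Nonempty Y := by
    by_contra hn
    rw [not_nonempty_iff] at hn
    simp at hπs1
  set s : Y → ℝ := fun y => ∑ y', P y' y * πs y' with hs
  -- symmetry: ∑ πs y * s y = 1/2
  have hT : ∑ y, πs y * s y = ∑ y, ∑ y', πs y * πs y' * P y' y := by
    apply Finset.sum_congr rfl; intro y _
    rw [hs, Finset.mul_sum]
    apply Finset.sum_congr rfl; intro y' _; ring
  have hswap : ∑ y, ∑ y', πs y * πs y' * P y' y = ∑ y, ∑ y', πs y * πs y' * P y y' := by
    rw [Finset.sum_comm]
    apply Finset.sum_congr rfl; intro y _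
    apply Finset.sum_congr rfl; intro y' _; ring
  have h2 : (∑ y, ∑ y', πs y * πs y' * P y' y)
      + (∑ y, ∑ y', πs y * πs y' * P y y') = 1 := by
    rw [← Finset.sum_add_distrib]
    have key : ∀ y : Y, (∑ y', πs y * πs y' * P y' y)
        + (∑ y', πs y * πs y' * P y y') = πs y := by
      intro y
      rw [← Finset.sum_add_distrib]
      have e : ∀ y' : Y, πs y * πs y' * P y' y + πs y * πs y' * P y y'
          = πs y * πs y' := by
        intro y'
        linear_combination (πs y * πs y') * hsym y' y
      rw [Finset.sum_congr rfl (fun y' _ => e y'), ← Finset.mul_sum, hπs1, mul_one]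
    rw [Finset.sum_congr rfl (fun y _ => key y), hπs1]
  have hhalf : ∑ y, πs y * s y = 1 / 2 := by linarith [hT, hswap, h2]
  -- KL = c
  have hKL : KL πs πref = c := by
    unfold KL
    have e : ∀ y : Y, πs y * Real.log (πs y / πref y)
        = πs y * ((1 / β) * (1 / 2 - s y)) + πs y * c := by
      intro y
      rw [Real.log_div (hπs y).ne' (href y).ne', hfix y]
      ring
    rw [Finset.sum_congr rfl (fun y _ => e y), Finset.sum_add_distrib]
    have h1 : ∑ y, πs y * ((1 / β) * (1 / 2 - s y)) = 0 := by
      have e2 : ∑ y, πs y * ((1 / β) * (1 / 2 - s y))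
          = (1 / β) * ∑ y, (πs y * (1 / 2) - πs y * s y) := by
        rw [Finset.mul_sum]
        apply Finset.sum_congr rfl; intro y _; ring
      rw [e2, Finset.sum_sub_distrib, ← Finset.sum_mul, hπs1, hhalf]
      ring
    rw [h1, ← Finset.sum_mul, hπs1]; ring
  rw [hKL]
  -- show c ≤ 1/(2β)
  by_contra h
  push_neg at h
  have key : ∀ y : Y, πref y < πs y := by
    intro y
    have hsy : s y ≤ 1 := by
      calc s y ≤ ∑ y', πs y' := by
            apply Finset.sum_le_sum
            intro y' _
            calc P y' y * πs y' ≤ 1 * πs y' :=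
                  mul_le_mul_of_nonneg_right (hP1 y' y) (hπs y').le
              _ = πs y' := one_mul _
        _ = 1 := hπs1
    have hlog : Real.log (πref y) < Real.log (πs y) := by
      rw [hfix y]
      have hpos : (0:ℝ) < (1 / β) * (1 / 2 - s y) + c := by
        have h1 : -(1 / β * (1 / 2 - s y)) ≤ 1 / (2 * β) := by
          have e3 : -(1 / β * (1 / 2 - s y)) = 1 / β * (s y - 1 / 2) := by ring
          have h4 : 1 / β * (s y - 1 / 2) ≤ 1 / β * (1 / 2) := by
            apply mul_le_mul_of_nonneg_left _ (by positivity)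
            linarith
          have e5 : 1 / β * (1 / 2 : ℝ) = 1 / (2 * β) := by
            field_simp
          rw [e3]; linarith
        linarith
      linarith
    exact (Real.log_lt_log_iff (href y) (hπs y)).mp hlog
  have habs : (1:ℝ) < 1 := by
    calc (1:ℝ) = ∑ y, πref y := href1.symm
      _ < ∑ y, πs y := Finset.sum_lt_sum_of_nonempty Finset.univ_nonempty (fun y _ => key y)
      _ = 1 := hπs1
  exact lt_irrefl _ habs
end

section
/- Let (A_t)_{t≥0} be nonnegative reals satisfying A_{t+1}² ≤ (1/(1+η)) A_t² + (2ηε/(2β(1+η))) A_{t+1} for all t, where η, β > 0 and ε ≥ 0. Then for all T ≥ 0, A_T² ≤ (1+η/2)^{-T} A_0² + 2ε²/β², after one also notes the quadratic-inequality step: A_{t+1} ≤ (ηε)/(2β(1+η)) + sqrt(A_t²/(1+η) + η²ε²/(4β²(1+η)²)) implies A_{t+1}² ≤ (1/(1+η/2)) A_t² + ηε²/(β²(1+η/2)). -/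
theorem stmt14 (η β ε : ℝ) (hη : 0 < η) (hβ : 0 < β) (hε : 0 ≤ ε)
    (A : ℕ → ℝ) (hA : ∀ t, 0 ≤ A t)
    (hrec : ∀ t, A (t + 1) ^ 2
      ≤ (1 / (1 + η)) * A t ^ 2 + (2 * η * ε / (2 * β * (1 + η))) * A (t + 1)) :
    (∀ t, A (t + 1) ≤ η * ε / (2 * β * (1 + η))
        + Real.sqrt (A t ^ 2 / (1 + η) + η ^ 2 * ε ^ 2 / (4 * β ^ 2 * (1 + η) ^ 2))) ∧
    (∀ t, A (t + 1) ^ 2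
        ≤ (1 / (1 + η / 2)) * A t ^ 2 + η * ε ^ 2 / (β ^ 2 * (1 + η / 2))) ∧
    (∀ T : ℕ, A T ^ 2 ≤ (1 / (1 + η / 2)) ^ T * A 0 ^ 2 + 2 * ε ^ 2 / β ^ 2) := by
  have h1η : (0:ℝ) < 1 + η := by linarith
  have h1η2 : (0:ℝ) < 1 + η / 2 := by linarith
  set b : ℝ := η * ε / (2 * β * (1 + η)) with hb
  -- Part 1
  have part1 : ∀ t, A (t + 1) ≤ b
      + Real.sqrt (A t ^ 2 / (1 + η) + η ^ 2 * ε ^ 2 / (4 * β ^ 2 * (1 + η) ^ 2)) := by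
    intro t
    have e2 : η ^ 2 * ε ^ 2 / (4 * β ^ 2 * (1 + η) ^ 2) = b ^ 2 := by
      rw [hb]; field_simp; ring
    rw [e2]
    have h1 : (A (t + 1) - b) ^ 2 ≤ A t ^ 2 / (1 + η) + b ^ 2 := by
      have h := hrec t
      have e3 : 2 * η * ε / (2 * β * (1 + η)) = 2 * b := by rw [hb]; ring
      rw [e3] at h
      have e4 : A t ^ 2 / (1 + η) = 1 / (1 + η) * A t ^ 2 := by ring
      have e5 : (A (t + 1) - b) ^ 2 = A (t + 1) ^ 2 - 2 * b * A (t + 1) + b ^ 2 := by ring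
      rw [e4, e5]; linarith
    have : A (t + 1) - b ≤ Real.sqrt (A t ^ 2 / (1 + η) + b ^ 2) := by
      calc A (t + 1) - b ≤ |A (t + 1) - b| := le_abs_self _
        _ = Real.sqrt ((A (t + 1) - b) ^ 2) := (Real.sqrt_sq_eq_abs _).symm
        _ ≤ _ := Real.sqrt_le_sqrt h1
    linarith
  -- Part 2
  have part2 : ∀ t, A (t + 1) ^ 2
      ≤ (1 / (1 + η / 2)) * A t ^ 2 + η * ε ^ 2 / (β ^ 2 * (1 + η / 2)) := by
    intro t
    have h := hrec t
    have e : (1 / (1 + η)) * A t ^ 2 + (2 * η * ε / (2 * β * (1 + η))) * A (t + 1)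
        = (β * A t ^ 2 + η * ε * A (t + 1)) / (β * (1 + η)) := by
      field_simp
    rw [e, le_div_iff₀ (by positivity)] at h
    -- h : A (t+1)^2 * (β * (1+η)) ≤ β * A t ^2 + η * ε * A (t+1)
    have key : A (t + 1) ^ 2 ≤ (β ^ 2 * A t ^ 2 + η * ε ^ 2) / (β ^ 2 * (1 + η / 2)) := by
      rw [le_div_iff₀ (by positivity)]
      nlinarith [h, sq_nonneg (β * A (t + 1) - ε), hη.le, hβ]
    refine key.trans (le_of_eq ?_)
    field_simp
  refine ⟨part1, part2, ?_⟩
  -- Part 3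
  intro T
  induction T with
  | zero =>
      simp only [pow_zero, one_mul]
      have : 0 ≤ 2 * ε ^ 2 / β ^ 2 := by positivity
      linarith
  | succ T ih =>
      have h := part2 T
      have hr : (0:ℝ) ≤ 1 / (1 + η / 2) := by positivity
      have step : (1 / (1 + η / 2)) * A T ^ 2
          ≤ (1 / (1 + η / 2)) * ((1 / (1 + η / 2)) ^ T * A 0 ^ 2 + 2 * ε ^ 2 / β ^ 2) :=
        mul_le_mul_of_nonneg_left ih hr
      have eq1 : (1 / (1 + η / 2)) * (2 * ε ^ 2 / β ^ 2) + η * ε ^ 2 / (β ^ 2 * (1 + η / 2))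
          = 2 * ε ^ 2 / β ^ 2 := by
        field_simp
      calc A (T + 1) ^ 2 ≤ (1 / (1 + η / 2)) * A T ^ 2 + η * ε ^ 2 / (β ^ 2 * (1 + η / 2)) := h
        _ ≤ (1 / (1 + η / 2)) * ((1 / (1 + η / 2)) ^ T * A 0 ^ 2 + 2 * ε ^ 2 / β ^ 2)
            + η * ε ^ 2 / (β ^ 2 * (1 + η / 2)) := by linarith
        _ = (1 / (1 + η / 2)) ^ (T + 1) * A 0 ^ 2
            + ((1 / (1 + η / 2)) * (2 * ε ^ 2 / β ^ 2) + η * ε ^ 2 / (β ^ 2 * (1 + η / 2))) := by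
            ring
        _ = _ := by rw [eq1]
end
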